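/- Let F be a PS-family (equivalence class of MLL proof structures under isomorphism of unlabelled link graphs). If Θ₁ and Θ₂ are distinct MLL proof nets in F, then d_F(Θ₁, Θ₂) ≥ 2, where d_F counts the minimal number of multiplicative links at which the ⊗/⅋-labelling of Θ₁ and Θ₂ differ over all isomorphisms of their underlying graphs. -/

import Mathlib

/-- An MLL link: an ID-link (axiom link) with two conclusions,
a tensor link or a par link with two premises and one conclusion. -/
inductive MLLLink (V : Type) where
  | idl (c₁ c₂ : V)
  | tensor (a b c : V)
  | par (a b c : V)
deriving DecidableEq

namespace MLLLink
variable {V V' : Type}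

def prems : MLLLink V → List V
  | idl _ _ => []
  | tensor a b _ => [a, b]
  | par a b _ => [a, b]

def concls : MLLLink V → List V
  | idl c₁ c₂ => [c₁, c₂]
  | tensor _ _ c => [c]
  | par _ _ c => [c]

def isId : MLLLink V → Bool
  | idl _ _ => true
  | _ => false

def isTensor : MLLLink V → Bool
  | tensor _ _ _ => true
  | _ => false

def isPar : MLLLink V → Bool
  | par _ _ _ => true
  | _ => false

/-- Relabel the vertices of a link along a map. -/
def map (f : V → V') : MLLLink V → MLLLink V'
  | idl c₁ c₂ => idl (f c₁) (f c₂)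
  | tensor a b c => tensor (f a) (f b) (f c)
  | par a b c => par (f a) (f b) (f c)

/-- Forget whether a multiplicative link is ⊗ or ⅋ (normalizing ⅋ to ⊗). -/
def forget : MLLLink V → MLLLink V
  | par a b c => tensor a b c
  | L => L

end MLLLink

/-- An MLL proof structure on the set `V` of formula occurrences:
every occurrence is the conclusion of exactly one link and the premise of
at most one link, and the occurrences appearing in a link are distinct. -/
structure MLLProofStructure (V : Type) [DecidableEq V] where
  links : Finset (MLLLink V)
  concl_exists : ∀ v : V, ∃ L ∈ links, v ∈ L.concls
  concl_unique : ∀ v : V, ∀ L ∈ links, ∀ L' ∈ links,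
      v ∈ L.concls → v ∈ L'.concls → L = L'
  prem_unique : ∀ v : V, ∀ L ∈ links, ∀ L' ∈ links,
      v ∈ L.prems → v ∈ L'.prems → L = L'
  nodup : ∀ L ∈ links, (L.prems ++ L.concls).Nodup

variable {V : Type} [DecidableEq V]

/-- The edge generated by a link under a DR-switching `S`
(`S L = true` selects the left premise of a ⅋-link). -/
def switchEdge (S : MLLLink V → Bool) (L : MLLLink V) (v w : V) : Prop :=
  match L with
  | .idl c₁ c₂ => v = c₁ ∧ w = c₂
  | .tensor a b c => (v = a ∧ w = c) ∨ (v = b ∧ w = c)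
  | .par a b c =>
      (S (.par a b c) = true ∧ v = a ∧ w = c) ∨
      (S (.par a b c) = false ∧ v = b ∧ w = c)

def drRel (Θ : MLLProofStructure V) (S : MLLLink V → Bool) (v w : V) : Prop :=
  ∃ L ∈ Θ.links, switchEdge S L v w

/-- The Danos–Regnier graph of a proof structure under a switching. -/
def drGraph (Θ : MLLProofStructure V) (S : MLLLink V → Bool) : SimpleGraph V :=
  SimpleGraph.fromRel (drRel Θ S)

/-- Danos–Regnier criterion: a proof net is a proof structure all of whose
DR-graphs are acyclic and connected. -/
def IsProofNet (Θ : MLLProofStructure V) : Prop :=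
  ∀ S : MLLLink V → Bool, (drGraph Θ S).IsAcyclic ∧ (drGraph Θ S).Connected

/-- The edges from `A` down to the conclusion of the link of which `A` is a premise. -/
def belowEdges (Θ : MLLProofStructure V) (A : V) : Set (Sym2 V) :=
  {e | ∃ L ∈ Θ.links, A ∈ L.prems ∧ ∃ c ∈ L.concls, e = s(A, c)}

/-- The DR-graph with the edge below `A` deleted. -/
def empGraph (Θ : MLLProofStructure V) (S : MLLLink V → Bool) (A : V) : SimpleGraph V :=
  (drGraph Θ S).deleteEdges (belowEdges Θ A)

/-- The vertex set of `Θ_S^A`: the connected component of `A` in the DR-graph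
after deleting the edge below `A`. -/
def empComp (Θ : MLLProofStructure V) (S : MLLLink V → Bool) (A : V) : Set V :=
  {v | (empGraph Θ S A).Reachable A v}

/-- The empire of `A` in `Θ`. -/
def empire (Θ : MLLProofStructure V) (A : V) : Set V :=
  ⋂ S : MLLLink V → Bool, empComp Θ S A

/-- A conclusion of `Θ` is a formula occurrence which is a premise of no link. -/
def IsConclusion (Θ : MLLProofStructure V) (v : V) : Prop :=
  ∀ L ∈ Θ.links, v ∉ L.prems

/-- All premises and conclusions of a link lie in `X`. -/
def allIn (X : Set V) (L : MLLLink V) : Prop :=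
  (∀ w ∈ L.prems, w ∈ X) ∧ (∀ w ∈ L.concls, w ∈ X)

/-- `X` together with the links of `Θ` contained in `X` forms a proof structure. -/
def IsSubProofStructure (Θ : MLLProofStructure V) (X : Set V) : Prop :=
  ∀ v ∈ X, ∃ L ∈ Θ.links, v ∈ L.concls ∧ allIn X L

def subDrRel (Θ : MLLProofStructure V) (X : Set V) (S : MLLLink V → Bool)
    (v w : V) : Prop :=
  ∃ L ∈ Θ.links, allIn X L ∧ switchEdge S L v w

/-- The DR-graph of the substructure of `Θ` induced on `X`. -/
def subDrGraph (Θ : MLLProofStructure V) (X : Set V) (S : MLLLink V → Bool) :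
    SimpleGraph V :=
  SimpleGraph.fromRel (subDrRel Θ X S)

/-- `X` is a sub-proof net of `Θ`: it induces a proof structure whose
DR-graphs are all acyclic and connected (on `X`). -/
def IsSubProofNet (Θ : MLLProofStructure V) (X : Set V) : Prop :=
  IsSubProofStructure Θ X ∧
    ∀ S : MLLLink V → Bool, (subDrGraph Θ X S).IsAcyclic ∧
      ∀ v ∈ X, ∀ w ∈ X, (subDrGraph Θ X S).Reachable v w

/-- `A` is a conclusion of the substructure induced on `X`. -/
def IsConclusionOfSub (Θ : MLLProofStructure V) (X : Set V) (A : V) : Prop :=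
  A ∈ X ∧ ∀ L ∈ Θ.links, allIn X L → A ∉ L.prems

/-- `e` is an isomorphism of the underlying link graphs of `Θ₁` and `Θ₂`,
forgetting the ⊗/⅋ labels: they witness that `Θ₁` and `Θ₂` are in the same PS-family. -/
def FamilyIso {V₁ V₂ : Type} [DecidableEq V₁] [DecidableEq V₂]
    (Θ₁ : MLLProofStructure V₁) (Θ₂ : MLLProofStructure V₂) (e : V₁ ≃ V₂) : Prop :=
  Θ₁.links.image (fun L => (L.map e).forget) = Θ₂.links.image MLLLink.forget

/-- The number of (multiplicative) links at which the ⊗/⅋-labellings of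
`Θ₁` and `Θ₂` differ along `e`. -/
def diffCount {V₁ V₂ : Type} [DecidableEq V₁] [DecidableEq V₂]
    (Θ₁ : MLLProofStructure V₁) (Θ₂ : MLLProofStructure V₂) (e : V₁ ≃ V₂) : ℕ :=
  (Θ₁.links.filter (fun L => L.map e ∉ Θ₂.links)).card

/-!
A single ⊗/⅋ mismatch means the two nets differ only in one link, a ⅋-link `par a b c` in one
and `tensor a b c` in the other. Every DR-graph of the ⅋ version is a connected spanning subgraph
of the corresponding DR-graph of the ⊗ version, which is a tree; a tree is minimally connected,
so the two graphs coincide. Hence under either switching of the ⅋-link the edge it drops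
(`b – c`, resp. `a – c`) must come from another link, which can only be a link with premise `c`
and conclusion `b`, resp. `a`. Premises determine their link and a link with a premise has one
conclusion, so `a = b`, contradicting the distinctness of the occurrences in `tensor a b c`.
-/

namespace MLLLink
variable {V V' : Type}

def flip : MLLLink V → MLLLink V
  | tensor a b c => par a b c
  | par a b c => tensor a b c
  | idl c₁ c₂ => idl c₁ c₂

@[simp]
lemma flip_flip (L : MLLLink V) : L.flip.flip = L := by
  cases L <;> rfl

@[simp]
lemma concls_flip (L : MLLLink V) : L.flip.concls = L.concls := by
  cases L <;> rfl

lemma forget_eq_forget_iff {L M : MLLLink V} : L.forget = M.forget ↔ L = M ∨ L = M.flip := by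
  cases L <;> cases M <;> simp [forget, flip]

lemma concls_nonempty (L : MLLLink V) : L.concls ≠ [] := by
  cases L <;> simp [concls]

lemma map_prems (f : V → V') (L : MLLLink V) : (L.map f).prems = L.prems.map f := by
  cases L <;> rfl

lemma map_concls (f : V → V') (L : MLLLink V) : (L.map f).concls = L.concls.map f := by
  cases L <;> rfl

lemma map_injective {f : V → V'} (hf : Function.Injective f) :
    Function.Injective (map f : MLLLink V → MLLLink V') := by
  intro L M h
  cases L <;> cases M <;> simp_all [map, hf.eq_iff]

lemma eq_of_mem_concls_of_mem_prems {L : MLLLink V} {a b c : V} (hc : c ∈ L.prems)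
    (ha : a ∈ L.concls) (hb : b ∈ L.concls) : a = b := by
  cases L <;> simp_all [prems, concls]

end MLLLink

lemma mem_concls_of_switchEdge {V : Type} {S : MLLLink V → Bool} {L : MLLLink V} {v w : V}
    (h : switchEdge S L v w) : w ∈ L.concls ∧ (v ∈ L.prems ∨ v ∈ L.concls) := by
  cases L <;> simp only [switchEdge] at h <;> aesop (add norm simp [MLLLink.prems, MLLLink.concls])

namespace MLLProofStructure

lemma flip_eq_self_of_mem (Θ : MLLProofStructure V) {L : MLLLink V} (hL : L ∈ Θ.links)
    (hLf : L.flip ∈ Θ.links) : L.flip = L := by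
  obtain ⟨c, hc⟩ := List.exists_mem_of_ne_nil _ L.concls_nonempty
  exact Θ.concl_unique c _ hLf _ hL (by rwa [MLLLink.concls_flip]) hc

lemma flip_mem_of_image_forget_eq {Θ Θ' : MLLProofStructure V}
    (hfam : Θ.links.image MLLLink.forget = Θ'.links.image MLLLink.forget)
    {N : MLLLink V} (hN : N ∈ Θ'.links) (hN' : N ∉ Θ.links) :
    N.flip ∈ Θ.links ∧ N.flip ∉ Θ'.links := by
  obtain ⟨K, hK, hKN⟩ := Finset.mem_image.1 (hfam ▸ Finset.mem_image_of_mem MLLLink.forget hN)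
  have hKflip : K = N.flip :=
    (MLLLink.forget_eq_forget_iff.1 hKN).resolve_left (by rintro rfl; exact hN' hK)
  subst hKflip
  refine ⟨hK, fun hN'' => hN' ?_⟩
  rwa [← Θ'.flip_eq_self_of_mem hN hN'']

lemma exists_mem_prems_of_drGraph_adj (Θ : MLLProofStructure V) {S : MLLLink V → Bool}
    {K : MLLLink V} {x c : V} (hK : K ∈ Θ.links) (hc : c ∈ K.concls)
    (hadj : (drGraph Θ S).Adj x c) (hKxc : ¬ (switchEdge S K x c ∨ switchEdge S K c x)) :
    ∃ L ∈ Θ.links, c ∈ L.prems ∧ x ∈ L.concls := by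
  have hLK : ∀ L ∈ Θ.links, c ∈ L.concls → L = K := fun L hL hcL =>
    Θ.concl_unique c L hL K hK hcL hc
  rcases (SimpleGraph.fromRel_adj _ _ _).1 hadj |>.2 with ⟨L, hL, hsw⟩ | ⟨L, hL, hsw⟩
  · rw [hLK L hL (mem_concls_of_switchEdge hsw).1] at hsw
    exact absurd (Or.inl hsw) hKxc
  · obtain ⟨hxL, hcL | hcL⟩ := mem_concls_of_switchEdge hsw
    · exact ⟨L, hL, hcL, hxL⟩
    · rw [hLK L hL hcL] at hsw
      exact absurd (Or.inr hsw) hKxc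

end MLLProofStructure

lemma IsProofNet.not_isProofNet_of_flip_par {Θ Θ' : MLLProofStructure V} {a b c : V}
    (hΘ : IsProofNet Θ) (hp : .par a b c ∈ Θ.links) (ht : .tensor a b c ∈ Θ'.links)
    (hsub : ∀ L ∈ Θ.links, L ≠ .par a b c → L ∈ Θ'.links) : ¬ IsProofNet Θ' := by
  intro hΘ'
  have hnd := Θ.nodup _ hp
  simp only [MLLLink.prems, MLLLink.concls, List.cons_append, List.nil_append, List.nodup_cons,
    List.mem_cons, List.not_mem_nil, or_false, not_or, List.nodup_nil] at hnd
  obtain ⟨⟨hab, hac⟩, hbc, -⟩ := hnd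
  have hle : ∀ S, drGraph Θ S ≤ drGraph Θ' S := by
    intro S v w hvw
    have hrel : ∀ x y, drRel Θ S x y → drRel Θ' S x y := by
      rintro x y ⟨L, hL, hsw⟩
      by_cases hLp : L = .par a b c
      · subst hLp
        refine ⟨_, ht, ?_⟩
        simp only [switchEdge] at hsw ⊢
        tauto
      · exact ⟨L, hsub L hL hLp, hsw⟩
    rw [drGraph, SimpleGraph.fromRel_adj] at hvw ⊢
    exact ⟨hvw.1, hvw.2.imp (hrel _ _) (hrel _ _)⟩
  have heq : ∀ S, drGraph Θ S = drGraph Θ' S := fun S =>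
    (SimpleGraph.isTree_iff_minimal_connected.1 ⟨(hΘ S).2.mono (hle S), (hΘ' S).1⟩).eq_of_le
      (hΘ S).2 (hle S)
  have htensor : ∀ S x, x = a ∨ x = b → (drGraph Θ S).Adj x c := by
    intro S x hx
    rw [heq, drGraph, SimpleGraph.fromRel_adj]
    refine ⟨by rcases hx with rfl | rfl <;> assumption, Or.inl ⟨_, ht, ?_⟩⟩
    simpa only [switchEdge, and_true] using hx
  have hc : c ∈ (MLLLink.par a b c).concls := by simp [MLLLink.concls]
  obtain ⟨L, hL, hcL, hbL⟩ := Θ.exists_mem_prems_of_drGraph_adj hp hc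
    (htensor (fun _ => true) b (Or.inr rfl)) (by simp [switchEdge, Ne.symm hab, hbc])
  obtain ⟨M, hM, hcM, haM⟩ := Θ.exists_mem_prems_of_drGraph_adj hp hc
    (htensor (fun _ => false) a (Or.inl rfl)) (by simp [switchEdge, hab, hac])
  obtain rfl := Θ.prem_unique c L hL M hM hcL hcM
  exact hab (MLLLink.eq_of_mem_concls_of_mem_prems hcL haM hbL)

namespace MLLProofStructure

lemma card_links_sdiff_ne_one {Θ Θ' : MLLProofStructure V} (hΘ : IsProofNet Θ)
    (hΘ' : IsProofNet Θ')
    (hfam : Θ.links.image MLLLink.forget = Θ'.links.image MLLLink.forget) :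
    (Θ.links \ Θ'.links).card ≠ 1 := by
  intro hcard
  obtain ⟨L₀, hL₀⟩ := Finset.card_eq_one.1 hcard
  have mem_sdiff_iff : ∀ L, L ∈ Θ.links ∧ L ∉ Θ'.links ↔ L = L₀ := fun L => by
    rw [← Finset.mem_sdiff, hL₀, Finset.mem_singleton]
  obtain ⟨hL₀Θ, hL₀Θ'⟩ := (mem_sdiff_iff L₀).2 rfl
  obtain ⟨hflipΘ', hflipΘ⟩ := flip_mem_of_image_forget_eq hfam.symm hL₀Θ hL₀Θ'
  have hsub : ∀ L ∈ Θ.links, L ≠ L₀ → L ∈ Θ'.links := fun L hL hne =>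
    by_contra fun h => hne ((mem_sdiff_iff L).1 ⟨hL, h⟩)
  have hsub' : ∀ N ∈ Θ'.links, N ≠ L₀.flip → N ∈ Θ.links := fun N hN hne =>
    by_contra fun h => hne (by
      rw [← (mem_sdiff_iff N.flip).1 (flip_mem_of_image_forget_eq hfam hN h),
        MLLLink.flip_flip])
  cases L₀ with
  | idl c₁ c₂ => exact hflipΘ hL₀Θ
  | tensor a b c => exact hΘ'.not_isProofNet_of_flip_par hflipΘ' hL₀Θ hsub' hΘ
  | par a b c => exact hΘ.not_isProofNet_of_flip_par hL₀Θ hflipΘ' hsub hΘ'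

end MLLProofStructure

lemma switchEdge_map {V₁ V₂ : Type} (e : V₁ ≃ V₂) (S : MLLLink V₂ → Bool)
    (L : MLLLink V₁) (v w : V₁) :
    switchEdge S (L.map e) (e v) (e w) ↔ switchEdge (fun K => S (K.map e)) L v w := by
  cases L <;> simp [switchEdge, MLLLink.map]

namespace MLLProofStructure

def map {V' : Type} [DecidableEq V'] (e : V ≃ V') (Θ : MLLProofStructure V) :
    MLLProofStructure V' where
  links := Θ.links.image (MLLLink.map e)
  concl_exists := by
    intro v
    obtain ⟨L, hL, hv⟩ := Θ.concl_exists (e.symm v)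
    exact ⟨L.map e, Finset.mem_image_of_mem _ hL, by
      rw [MLLLink.map_concls]; exact List.mem_map.2 ⟨_, hv, e.apply_symm_apply v⟩⟩
  concl_unique := by
    intro v M hM M' hM' hv hv'
    obtain ⟨L, hL, rfl⟩ := Finset.mem_image.1 hM
    obtain ⟨L', hL', rfl⟩ := Finset.mem_image.1 hM'
    rw [MLLLink.map_concls, List.mem_map] at hv hv'
    obtain ⟨u, hu, rfl⟩ := hv
    obtain ⟨u', hu', huu⟩ := hv'
    rw [e.injective huu] at hu'
    exact congrArg _ (Θ.concl_unique u L hL L' hL' hu hu')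
  prem_unique := by
    intro v M hM M' hM' hv hv'
    obtain ⟨L, hL, rfl⟩ := Finset.mem_image.1 hM
    obtain ⟨L', hL', rfl⟩ := Finset.mem_image.1 hM'
    rw [MLLLink.map_prems, List.mem_map] at hv hv'
    obtain ⟨u, hu, rfl⟩ := hv
    obtain ⟨u', hu', huu⟩ := hv'
    rw [e.injective huu] at hu'
    exact congrArg _ (Θ.prem_unique u L hL L' hL' hu hu')
  nodup := by
    intro M hM
    obtain ⟨L, hL, rfl⟩ := Finset.mem_image.1 hM
    rw [MLLLink.map_prems, MLLLink.map_concls, ← List.map_append]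
    exact (Θ.nodup L hL).map e.injective

end MLLProofStructure

lemma drRel_map {V V' : Type} [DecidableEq V] [DecidableEq V'] (e : V ≃ V')
    (Θ : MLLProofStructure V) (S : MLLLink V' → Bool) (v w : V) :
    drRel (Θ.map e) S (e v) (e w) ↔ drRel Θ (fun K => S (K.map e)) v w := by
  constructor
  · rintro ⟨M, hM, hsw⟩
    obtain ⟨L, hL, rfl⟩ := Finset.mem_image.1 hM
    exact ⟨L, hL, (switchEdge_map e S L v w).1 hsw⟩
  · rintro ⟨L, hL, hsw⟩
    exact ⟨L.map e, Finset.mem_image_of_mem _ hL, (switchEdge_map e S L v w).2 hsw⟩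

def drGraphMapIso {V V' : Type} [DecidableEq V] [DecidableEq V'] (e : V ≃ V')
    (Θ : MLLProofStructure V) (S : MLLLink V' → Bool) :
    drGraph Θ (fun K => S (K.map e)) ≃g drGraph (Θ.map e) S where
  toEquiv := e
  map_rel_iff' := by
    intro u v
    simp only [drGraph, SimpleGraph.fromRel_adj, drRel_map, ne_eq,
      EmbeddingLike.apply_eq_iff_eq]

lemma IsProofNet.map {V V' : Type} [DecidableEq V] [DecidableEq V'] (e : V ≃ V')
    {Θ : MLLProofStructure V} (h : IsProofNet Θ) : IsProofNet (Θ.map e) := fun S =>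
  ⟨(drGraphMapIso e Θ S).isAcyclic_iff.1 (h _).1,
    (drGraphMapIso e Θ S).connected_iff.1 (h _).2⟩

lemma familyIso_iff {V₁ V₂ : Type} [DecidableEq V₁] [DecidableEq V₂]
    (Θ₁ : MLLProofStructure V₁) (Θ₂ : MLLProofStructure V₂) (e : V₁ ≃ V₂) :
    FamilyIso Θ₁ Θ₂ e ↔
      (Θ₁.map e).links.image MLLLink.forget = Θ₂.links.image MLLLink.forget := by
  rw [FamilyIso, MLLProofStructure.map, Finset.image_image]
  rfl

lemma diffCount_eq_card_sdiff {V₁ V₂ : Type} [DecidableEq V₁] [DecidableEq V₂]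
    (Θ₁ : MLLProofStructure V₁) (Θ₂ : MLLProofStructure V₂) (e : V₁ ≃ V₂) :
    diffCount Θ₁ Θ₂ e = ((Θ₁.map e).links \ Θ₂.links).card := by
  rw [diffCount, ← Finset.card_image_of_injective _ (MLLLink.map_injective e.injective)]
  congr 1
  ext N
  simp only [MLLProofStructure.map, Finset.mem_image, Finset.mem_filter, Finset.mem_sdiff]
  constructor
  · rintro ⟨L, ⟨hL, hLe⟩, rfl⟩
    exact ⟨⟨L, hL, rfl⟩, hLe⟩
  · rintro ⟨⟨L, hL, rfl⟩, hLe⟩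
    exact ⟨L, ⟨hL, hLe⟩, rfl⟩

theorem proofnets_distance_ge_two_general {V₁ V₂ : Type} [DecidableEq V₁] [DecidableEq V₂]
    (Θ₁ : MLLProofStructure V₁) (Θ₂ : MLLProofStructure V₂)
    (h₁ : IsProofNet Θ₁) (h₂ : IsProofNet Θ₂)
    (hne : ¬ ∃ e : V₁ ≃ V₂, FamilyIso Θ₁ Θ₂ e ∧ diffCount Θ₁ Θ₂ e = 0) :
    ∀ e : V₁ ≃ V₂, FamilyIso Θ₁ Θ₂ e → 2 ≤ diffCount Θ₁ Θ₂ e := by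
  intro e he
  have h0 : diffCount Θ₁ Θ₂ e ≠ 0 := fun h => hne ⟨e, he, h⟩
  have h1 : diffCount Θ₁ Θ₂ e ≠ 1 := by
    rw [diffCount_eq_card_sdiff]
    exact MLLProofStructure.card_links_sdiff_ne_one (h₁.map e) h₂
      ((familyIso_iff Θ₁ Θ₂ e).1 he)
  omega

/-- One-error-detection: two distinct MLL proof nets in the same PS-family are
at distance at least 2, i.e. every isomorphism of their underlying unlabelled
link graphs exhibits at least two ⊗/⅋-label mismatches. -/
theorem proofnets_distance_ge_two {V₁ V₂ : Type} [DecidableEq V₁] [DecidableEq V₂]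
    (Θ₁ : MLLProofStructure V₁) (Θ₂ : MLLProofStructure V₂)
    (h₁ : IsProofNet Θ₁) (h₂ : IsProofNet Θ₂)
    (hfam : ∃ e : V₁ ≃ V₂, FamilyIso Θ₁ Θ₂ e)
    (hne : ¬ ∃ e : V₁ ≃ V₂, FamilyIso Θ₁ Θ₂ e ∧ diffCount Θ₁ Θ₂ e = 0) :
    ∀ e : V₁ ≃ V₂, FamilyIso Θ₁ Θ₂ e → 2 ≤ diffCount Θ₁ Θ₂ e :=
  proofnets_distance_ge_two_general Θ₁ Θ₂ h₁ h₂ hne
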